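/- Let X be a countable subshift over a finite alphabet A and let (c_i)_{i∈ℕ} be a sequence in X with c_{i+1} ≺ c_i for every i ∈ ℕ. Then there exists a configuration c ∈ X with c ⪯ c_i for all i ∈ ℕ such that c is not at level 0 in X (i.e., c is not ⪯-minimal in X). In other words, in a countable subshift there is no infinite strictly decreasing ⪯-chain all of whose lower bounds are at level 0. -/

import Mathlib

namespace CountableSubshift

/-- A configuration over alphabet `A` on the plane `ℤ × ℤ`. -/
abbrev Config (A : Type*) := ℤ × ℤ → A

variable {A : Type*}

/-- The shift by a vector `v`. -/
def shift (v : ℤ × ℤ) (x : Config A) : Config A := fun u => x (u + v)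

/-- The shift-orbit of a configuration. -/
def orbit (x : Config A) : Set (Config A) := Set.range fun v => shift v x

variable [TopologicalSpace A]

/-- `Preceq x y` iff `x` belongs to the closure of the shift-orbit of `y`. -/
def Preceq (x y : Config A) : Prop := x ∈ closure (orbit y)

/-- Strict version of `Preceq`. -/
def Prec (x y : Config A) : Prop := Preceq x y ∧ ¬ Preceq y x

/-- `x ≈ y` : mutual `Preceq`. -/
def OrbEquiv (x y : Config A) : Prop := Preceq x y ∧ Preceq y x

/-- A subshift: nonempty, closed and shift-invariant set of configurations. -/
def IsSubshift (X : Set (Config A)) : Prop :=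
  X.Nonempty ∧ IsClosed X ∧ ∀ v : ℤ × ℤ, shift v '' X = X

/-- A configuration is periodic if it has two linearly independent vectors of periodicity. -/
def Periodic (x : Config A) : Prop :=
  ∃ v w : ℤ × ℤ, shift v x = x ∧ shift w x = x ∧ LinearIndependent ℤ ![v, w]

/-- `x` is at level 0 in `X`: it is `Preceq`-minimal in `X`. -/
def Level0 (X : Set (Config A)) (x : Config A) : Prop :=
  x ∈ X ∧ ∀ y ∈ X, Preceq y x → Preceq x y

/-- `x` is at level 1 in `X`. -/
def Level1 (X : Set (Config A)) (x : Config A) : Prop :=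
  x ∈ X ∧ ¬ Level0 X x ∧ ∀ y ∈ X, Prec y x → Level0 X y

/-- `x` is at level 2 in `X`. -/
def Level2 (X : Set (Config A)) (x : Config A) : Prop :=
  x ∈ X ∧ ¬ Level0 X x ∧ ¬ Level1 X x ∧ ∀ y ∈ X, Prec y x → Level0 X y ∨ Level1 X y

/-- The pattern `p` with (finite) domain `D` appears in `x` at position `u`. -/
def AppearsAt (D : Finset (ℤ × ℤ)) (p : ℤ × ℤ → A) (x : Config A) (u : ℤ × ℤ) : Prop :=
  ∀ d ∈ D, x (u + d) = p d

/-- A subshift of finite type: the nonempty set of configurations avoiding a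
finite family of forbidden patterns. -/
def IsSFT (X : Set (Config A)) : Prop :=
  X.Nonempty ∧ ∃ (n : ℕ) (D : Fin n → Finset (ℤ × ℤ)) (p : Fin n → ℤ × ℤ → A),
    X = {x : Config A | ∀ (i : Fin n) (u : ℤ × ℤ), ¬ AppearsAt (D i) (p i) x u}

/-- Every pattern appearing in `c` appears at infinitely many positions. -/
def AllPatternsInfinite (c : Config A) : Prop :=
  ∀ (D : Finset (ℤ × ℤ)) (u : ℤ × ℤ),
    {u' : ℤ × ℤ | ∀ d ∈ D, c (u' + d) = c (u + d)}.Infinite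

/-- The standard dot product on `ℤ × ℤ`. -/
def dot (u w : ℤ × ℤ) : ℤ := u.1 * w.1 + u.2 * w.2


open Filter Topology

set_option maxHeartbeats 1000000
set_option linter.unusedSectionVars false

lemma shift_shift (v w : ℤ × ℤ) (x : Config A) : shift v (shift w x) = shift (v + w) x := by
  funext u; simp [shift, add_assoc]

lemma shift_zero (x : Config A) : shift (0 : ℤ×ℤ) x = x := by funext u; simp [shift]

lemma continuous_shift (v : ℤ × ℤ) : Continuous (shift v : Config A → Config A) := by
  apply continuous_pi; intro u; exact continuous_apply (u + v)

lemma preceq_refl (x : Config A) : Preceq x x :=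
  subset_closure ⟨0, shift_zero x⟩

lemma period_neg {v : ℤ×ℤ} {x : Config A} (h : shift v x = x) : shift (-v) x = x := by
  conv_lhs => rw [← h]
  rw [shift_shift, neg_add_cancel, shift_zero]

lemma period_zsmul {v : ℤ×ℤ} {x : Config A} (h : shift v x = x) (n : ℤ) :
    shift (n • v) x = x := by
  induction n using Int.induction_on with
  | zero => simpa using shift_zero x
  | succ k ih =>
      rw [show ((k:ℤ)+1) • v = v + (k:ℤ) • v by rw [add_smul, one_smul, add_comm],
        ← shift_shift, ih, h]
  | pred k ih =>
      rw [show (-(k:ℤ)-1) • v = -v + (-(k:ℤ)) • v by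
            rw [sub_smul, one_smul, sub_eq_add_neg, add_comm, neg_smul],
        ← shift_shift, ih, period_neg h]

variable [DiscreteTopology A]

lemma mem_closure_iff_finset {S : Set (Config A)} {x : Config A} :
    x ∈ closure S ↔ ∀ D : Finset (ℤ × ℤ), ∃ y ∈ S, ∀ u ∈ D, y u = x u := by
  rw [mem_closure_iff]
  constructor
  · intro h D
    have hop : IsOpen {y : Config A | ∀ u ∈ D, y u = x u} := by
      have : {y : Config A | ∀ u ∈ D, y u = x u} = ⋂ u ∈ D, (fun y : Config A => y u) ⁻¹' {x u} := by
        ext y; simp [Set.mem_iInter]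
      rw [this]
      exact isOpen_biInter_finset fun u _ => (continuous_apply u).isOpen_preimage _ (isOpen_discrete _)
    obtain ⟨y, hy1, hy2⟩ := h _ hop (fun u _ => rfl)
    exact ⟨y, hy2, hy1⟩
  · intro h o ho hxo
    obtain ⟨I, u, hIu, hsub⟩ := isOpen_pi_iff.mp ho x hxo
    obtain ⟨y, hyS, hy⟩ := h I
    refine ⟨y, hsub fun i hi => ?_, hyS⟩
    rw [hy i hi]; exact (hIu i hi).2

lemma preceq_iff {x y : Config A} :
    Preceq x y ↔ ∀ D : Finset (ℤ × ℤ), ∃ v : ℤ×ℤ, ∀ u ∈ D, y (u + v) = x u := by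
  rw [Preceq, mem_closure_iff_finset]
  constructor
  · intro h D
    obtain ⟨w, ⟨v, rfl⟩, hw⟩ := h D
    exact ⟨v, hw⟩
  · intro h D
    obtain ⟨v, hv⟩ := h D
    exact ⟨shift v y, ⟨v, rfl⟩, hv⟩

lemma preceq_trans {x y z : Config A} (h1 : Preceq x y) (h2 : Preceq y z) : Preceq x z := by
  rw [preceq_iff] at *
  intro D
  obtain ⟨v, hv⟩ := h1 D
  obtain ⟨w, hw⟩ := h2 (D.image (· + v))
  refine ⟨v + w, fun u hu => ?_⟩
  have := hw (u + v) (Finset.mem_image_of_mem _ hu)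
  rw [← add_assoc]; rw [this]; exact hv u hu

lemma preceq_shift {x y : Config A} (v : ℤ×ℤ) (h : Preceq x y) : Preceq (shift v x) y := by
  rw [preceq_iff] at *
  intro D
  obtain ⟨w, hw⟩ := h (D.image (· + v))
  refine ⟨v + w, fun u hu => ?_⟩
  have := hw (u + v) (Finset.mem_image_of_mem _ hu)
  rw [← add_assoc]; rw [this]; rfl

lemma closure_orbit_subset {X : Set (Config A)} (hX : IsSubshift X) {x : Config A}
    (hx : x ∈ X) : closure (orbit x) ⊆ X := by
  apply closure_minimal _ hX.2.1
  rintro _ ⟨v, rfl⟩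
  rw [← hX.2.2 v]; exact ⟨x, hx, rfl⟩

lemma period_of_preceq {v : ℤ×ℤ} {g y : Config A} (hg : shift v g = g) (hy : Preceq y g) :
    shift v y = y := by
  have hcl : IsClosed {w : Config A | shift v w = w} := by
    have heq : {w : Config A | shift v w = w} = ⋂ u : ℤ×ℤ, {w : Config A | w (u + v) = w u} := by
      ext w
      simp only [Set.mem_setOf_eq, Set.mem_iInter]
      constructor
      · intro h u; exact congrFun h u
      · intro h; funext u; exact h u
    rw [heq]
    exact isClosed_iInter fun u =>
      isClosed_eq (continuous_apply (u + v)) (continuous_apply u)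
  have horb : orbit g ⊆ {w : Config A | shift v w = w} := by
    rintro _ ⟨w, rfl⟩
    show shift v (shift w g) = shift w g
    rw [shift_shift, add_comm, ← shift_shift, hg]
  exact closure_minimal horb hcl hy

set_option maxHeartbeats 1000000
set_option linter.unusedSectionVars false
def nrm (u : ℤ × ℤ) : ℤ := max |u.1| |u.2|

lemma nrm_nonneg (u : ℤ×ℤ) : 0 ≤ nrm u := le_trans (abs_nonneg _) (le_max_left _ _)

lemma abs_fst_le (u : ℤ×ℤ) : |u.1| ≤ nrm u := le_max_left _ _
lemma abs_snd_le (u : ℤ×ℤ) : |u.2| ≤ nrm u := le_max_right _ _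

lemma nrm_le (u : ℤ×ℤ) {k : ℤ} (h1 : |u.1| ≤ k) (h2 : |u.2| ≤ k) : nrm u ≤ k :=
  max_le h1 h2

lemma nrm_add_le (u w : ℤ×ℤ) : nrm (u + w) ≤ nrm u + nrm w := by
  apply nrm_le
  · exact le_trans (abs_add_le _ _) (add_le_add (abs_fst_le u) (abs_fst_le w))
  · exact le_trans (abs_add_le _ _) (add_le_add (abs_snd_le u) (abs_snd_le w))

lemma finite_nrm_le (k : ℤ) : {t : ℤ×ℤ | nrm t ≤ k}.Finite := by
  apply (Set.finite_Icc ((-k, -k) : ℤ×ℤ) (k, k)).subset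
  intro t ht
  simp only [Set.mem_setOf_eq] at ht
  have h1 := le_trans (abs_fst_le t) ht
  have h2 := le_trans (abs_snd_le t) ht
  rw [abs_le] at h1 h2
  constructor <;> constructor <;> simp [h1.1, h1.2, h2.1, h2.2]

lemma exists_clamp (a k M : ℤ) (hk : 0 ≤ k) (ha : |a| ≤ M) (hkM : k ≤ M) :
    ∃ t : ℤ, |t| ≤ k ∧ |a + t| ≤ M - k := by
  rw [abs_le] at ha
  rcases le_total |a| k with h | h
  · rw [abs_le] at h
    exact ⟨-a, by rw [abs_neg, abs_le]; omega, by rw [abs_le]; omega⟩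
  · rcases le_total 0 a with h0 | h0
    · rw [abs_of_nonneg h0] at h
      exact ⟨-k, by rw [abs_neg, abs_le]; omega, by rw [abs_le]; omega⟩
    · rw [abs_of_nonpos h0] at h
      exact ⟨k, by rw [abs_le]; omega, by rw [abs_le]; omega⟩

lemma exists_infinite_fiber {f : ℕ → ℤ×ℤ} {k : ℤ} (hf : ∀ n, nrm (f n) ≤ k) :
    ∃ t, {n | f n = t}.Infinite := by
  by_contra h
  push_neg at h
  have : (Set.univ : Set ℕ) ⊆ ⋃ t ∈ {t : ℤ×ℤ | nrm t ≤ k}, {n | f n = t} := by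
    intro n _
    simp only [Set.mem_iUnion]
    exact ⟨f n, hf n, rfl⟩
  exact Set.infinite_univ ((((finite_nrm_le k).biUnion fun t _ => h t).subset this))
def Brk (v w : ℤ×ℤ) (x : Config A) (u : ℤ×ℤ) : Prop :=
  ¬ (x (u + v) = x u ∧ x (u + w) = x u)

omit [TopologicalSpace A] in
lemma brk_shift {v w s : ℤ×ℤ} {x : Config A} {u : ℤ×ℤ} :
    Brk v w (shift s x) u ↔ Brk v w x (u + s) := by
  unfold Brk shift
  rw [add_right_comm u v s, add_right_comm u w s]

omit [TopologicalSpace A] in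
lemma exists_min_brk {v w : ℤ×ℤ} {x : Config A} (h : ∃ u, Brk v w x u) :
    ∃ u, Brk v w x u ∧ ∀ u', Brk v w x u' → nrm u ≤ nrm u' := by
  classical
  obtain ⟨u₀, hu₀⟩ := h
  obtain ⟨n, ⟨u, hu, hun⟩, hmin⟩ := Nat.lt_wfRel.wf.has_min
    {n : ℕ | ∃ u, Brk v w x u ∧ (nrm u).toNat = n} ⟨(nrm u₀).toNat, u₀, hu₀, rfl⟩
  refine ⟨u, hu, fun u' hu' => ?_⟩
  have h2 : ¬ ((nrm u').toNat < n) := hmin _ ⟨u', hu', rfl⟩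
  have h3 := nrm_nonneg u
  have h4 := nrm_nonneg u'
  omega

omit [TopologicalSpace A] in
lemma good_center {v w u₀ : ℤ×ℤ} {x : Config A}
    (hmin : ∀ u', Brk v w x u' → nrm u₀ ≤ nrm u') (r : ℤ) (hr : 0 ≤ r)
    (hM : r + 1 ≤ nrm u₀) :
    ∃ t : ℤ×ℤ, nrm t ≤ r + 1 ∧ ∀ u : ℤ×ℤ, nrm u ≤ r → ¬ Brk v w x (u + t + u₀) := by
  obtain ⟨t1, ht1, ht1'⟩ := exists_clamp u₀.1 (r+1) (nrm u₀) (by omega) (abs_fst_le u₀) hM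
  obtain ⟨t2, ht2, ht2'⟩ := exists_clamp u₀.2 (r+1) (nrm u₀) (by omega) (abs_snd_le u₀) hM
  refine ⟨(t1, t2), nrm_le _ ht1 ht2, fun u hu hbrk => ?_⟩
  have h1 := hmin _ hbrk
  have h2 : nrm ((t1, t2) + u₀) ≤ nrm u₀ - (r + 1) := by
    apply nrm_le
    · simpa [add_comm] using ht1'
    · simpa [add_comm] using ht2'
  have h3 := le_trans (nrm_add_le u ((t1,t2) + u₀)) (add_le_add hu h2)
  rw [add_assoc] at h1
  omega

lemma finite_of_minimal [Fintype A] (M : Set (Config A)) (hM : IsCompact M)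
    (hcnt : M.Countable) (hne : M.Nonempty)
    (hinv : ∀ v : ℤ×ℤ, ∀ y ∈ M, shift v y ∈ M)
    (hmin : ∀ y ∈ M, M ⊆ closure (orbit y)) : M.Finite := by
  classical
  by_contra hinf
  -- isolated point via Baire
  haveI : CompactSpace ↥M := isCompact_iff_compactSpace.mp hM
  haveI : BaireSpace ↥M := BaireSpace.of_t2Space_locallyCompactSpace
  haveI : Countable ↥M := hcnt.to_subtype
  haveI : Nonempty ↥M := hne.to_subtype
  obtain ⟨m, hm⟩ := nonempty_interior_of_iUnion_of_closed (X := ↥M) (ι := ↥M)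
    (f := fun m => {m}) (fun i => isClosed_singleton) (by ext x; simp)
  have hop : IsOpen ({m} : Set ↥M) := by
    have h1 : interior ({m} : Set ↥M) = {m} := by
      rcases hm with ⟨y, hy⟩
      have := interior_subset (s := ({m} : Set ↥M)) hy
      simp only [Set.mem_singleton_iff] at this; subst this
      exact subset_antisymm interior_subset (by simpa [Set.singleton_subset_iff] using hy)
    rw [← h1]; exact isOpen_interior
  obtain ⟨U, hUopen, hUpre⟩ := isOpen_induced_iff.mp hop
  have hUm : (m : Config A) ∈ U := by
    have : m ∈ Subtype.val ⁻¹' U := by rw [hUpre]; rfl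
    exact this
  have hUM : ∀ q ∈ U ∩ M, q = (m : Config A) := by
    rintro q ⟨hqU, hqM⟩
    have : (⟨q, hqM⟩ : ↥M) ∈ Subtype.val ⁻¹' U := hqU
    rw [hUpre] at this
    exact congrArg Subtype.val this
  -- a non-isolated point exists since M is infinite
  have hacc : ∃ p ∈ M, p ∈ closure (M \ {p}) := by
    by_contra hiso
    push_neg at hiso
    have hU : ∀ p : ↥M, ∃ V : Set (Config A), IsOpen V ∧ (p:Config A) ∈ V ∧
        V ∩ (M \ {(p:Config A)}) = ∅ := by
      intro p
      have := hiso p p.2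
      rw [mem_closure_iff] at this
      push_neg at this
      obtain ⟨V, hV1, hV2, hV3⟩ := this
      exact ⟨V, hV1, hV2, hV3⟩
    choose V hVopen hVmem hVdisj using hU
    have hcover : M ⊆ ⋃ p : ↥M, V p := fun q hq =>
      Set.mem_iUnion.mpr ⟨⟨q, hq⟩, hVmem ⟨q, hq⟩⟩
    obtain ⟨F, hF⟩ := hM.elim_finite_subcover V hVopen hcover
    apply hinf
    apply (Set.Finite.image (fun p : ↥M => (p : Config A)) F.finite_toSet).subset
    intro q hq
    obtain ⟨p, hpF, hqV⟩ := Set.mem_iUnion₂.mp (hF hq)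
    have : q = (p : Config A) := by
      by_contra hne'
      have : q ∈ V p ∩ (M \ {(p:Config A)}) := ⟨hqV, hq, hne'⟩
      rw [hVdisj p] at this
      exact this
    exact ⟨p, hpF, this.symm⟩
  obtain ⟨p, hpM, hpacc⟩ := hacc
  -- m ∈ closure (orbit p), so some shift of p is in U ∩ M = {m}
  have hmcl : (m : Config A) ∈ closure (orbit p) := hmin p hpM m.2
  rw [mem_closure_iff] at hmcl
  obtain ⟨y, hyU, v, rfl⟩ := hmcl U hUopen hUm
  have hyM : shift v p ∈ M := hinv v p hpM
  have hym : shift v p = (m : Config A) := hUM _ ⟨hyU, hyM⟩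
  -- then m is in closure (M \ {m}), contradicting isolation
  have himg : shift v '' (M \ {p}) ⊆ M \ {(m : Config A)} := by
    rintro _ ⟨y', ⟨hy'M, hy'p⟩, rfl⟩
    refine ⟨hinv v y' hy'M, ?_⟩
    intro heq
    apply hy'p
    have : shift (-v) (shift v y') = shift (-v) (shift v p) := by
      rw [hym]
      rw [Set.mem_singleton_iff] at heq
      rw [heq]
    rwa [shift_shift, shift_shift, neg_add_cancel, shift_zero, shift_zero] at this
  have hmem2 : (m : Config A) ∈ closure (M \ {(m : Config A)}) := by
    have h1 : shift v p ∈ shift v '' closure (M \ {p}) := ⟨p, hpacc, rfl⟩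
    have h2 := (image_closure_subset_closure_image (continuous_shift v)) h1
    rw [hym] at h2
    exact closure_mono himg h2
  rw [mem_closure_iff] at hmem2
  obtain ⟨y, hyU, hyM, hyne⟩ := hmem2 U hUopen hUm
  exact hyne (hUM y ⟨hyU, hyM⟩)

lemma eq_of_periodic_agree {x z : Config A} {p q : ℤ} (hp : 0 < p) (hq : 0 < q)
    (hx1 : shift ((p,0) : ℤ×ℤ) x = x) (hx2 : shift ((0,q) : ℤ×ℤ) x = x)
    (hz1 : shift ((p,0) : ℤ×ℤ) z = z) (hz2 : shift ((0,q) : ℤ×ℤ) z = z)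
    (hagr : ∀ u : ℤ×ℤ, nrm u ≤ max p q → x u = z u) : x = z := by
  have key : ∀ y : Config A, shift ((p,0) : ℤ×ℤ) y = y → shift ((0,q) : ℤ×ℤ) y = y →
      ∀ u : ℤ×ℤ, y u = y (u.1 % p, u.2 % q) := by
    intro y h1 h2 u
    have hnn : shift ((u.1 / p) • ((p,0):ℤ×ℤ) + (u.2 / q) • ((0,q):ℤ×ℤ)) y = y := by
      rw [← shift_shift, period_zsmul h2, period_zsmul h1]
    have harg : (u.1 % p, u.2 % q) + ((u.1 / p) • ((p,0):ℤ×ℤ) + (u.2 / q) • ((0,q):ℤ×ℤ)) = u := by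
      have e1 := Int.emod_add_mul_ediv u.1 p
      have e2 := Int.emod_add_mul_ediv u.2 q
      have m1 : u.1 / p * p = p * (u.1 / p) := mul_comm _ _
      have m2 : u.2 / q * q = q * (u.2 / q) := mul_comm _ _
      simp only [Prod.smul_mk, smul_eq_mul, mul_zero, Prod.mk_add_mk, Prod.ext_iff]
      constructor <;> simp <;> omega
    calc y u = y ((u.1 % p, u.2 % q) + ((u.1/p) • ((p,0):ℤ×ℤ) + (u.2/q) • ((0,q):ℤ×ℤ))) := by
          rw [harg]
      _ = (shift ((u.1/p) • ((p,0):ℤ×ℤ) + (u.2/q) • ((0,q):ℤ×ℤ)) y) (u.1 % p, u.2 % q) := rfl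
      _ = y (u.1 % p, u.2 % q) := by rw [hnn]
  funext u
  rw [key x hx1 hx2 u, key z hz1 hz2 u]
  apply hagr
  apply nrm_le
  · rw [abs_of_nonneg (Int.emod_nonneg _ (by omega))]
    exact le_trans (Int.emod_lt_of_pos _ hp).le (le_max_left p q)
  · rw [abs_of_nonneg (Int.emod_nonneg _ (by omega))]
    exact le_trans (Int.emod_lt_of_pos _ hq).le (le_max_right p q)


lemma exists_period {z : Config A} {M : Set (Config A)} (hfin : M.Finite)
    (horb : orbit z ⊆ M) (e : ℤ×ℤ) :
    ∃ p : ℤ, 0 < p ∧ shift (p • e) z = z := by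
  have hmaps : Set.MapsTo (fun n : ℤ => shift (n • e) z) Set.univ M :=
    fun n _ => horb ⟨n • e, rfl⟩
  obtain ⟨a, -, b, -, hab, heq⟩ := Set.infinite_univ.exists_ne_map_eq_of_mapsTo hmaps hfin
  have key : ∀ a b : ℤ, shift (a • e) z = shift (b • e) z → shift ((a-b) • e) z = z := by
    intro a b h
    have h1 := congrArg (shift (-(b • e))) h
    rw [shift_shift, shift_shift, neg_add_cancel, shift_zero] at h1
    have h2 : -(b • e) + a • e = (a - b) • e := by
      rw [sub_smul, neg_add_eq_sub]
    rwa [h2] at h1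
  rcases hab.lt_or_gt with h | h
  · exact ⟨b - a, by omega, key b a heq.symm⟩
  · exact ⟨a - b, by omega, key a b heq⟩

lemma eventually_agree {f : ℕ → Config A} {x : Config A}
    (h : Tendsto f atTop (𝓝 x)) (D : Finset (ℤ×ℤ)) :
    ∀ᶠ n in atTop, ∀ u ∈ D, f n u = x u := by
  rw [Filter.eventually_all_finset]
  intro u _
  have h1 := tendsto_pi_nhds.mp h u
  have h2 : ({x u} : Set A) ∈ 𝓝 (x u) := (isOpen_discrete _).mem_nhds rfl
  filter_upwards [h1 h2] with n hn
  exact hn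


theorem stmt2 {A : Type*} [Fintype A] [Nonempty A] [TopologicalSpace A] [DiscreteTopology A]
    (X : Set (Config A)) (hX : IsSubshift X) (hcount : X.Countable)
    (c : ℕ → Config A) (hc : ∀ i, c i ∈ X)
    (hchain : ∀ i, Prec (c (i + 1)) (c i)) :
    ∃ x ∈ X, (∀ i, Preceq x (c i)) ∧ ¬ Level0 X x := by
  classical
  have hOX : ∀ i, closure (orbit (c i)) ⊆ X := fun i => closure_orbit_subset hX (hc i)
  have hstep : ∀ i, closure (orbit (c (i+1))) ⊆ closure (orbit (c i)) := by
    intro i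
    apply closure_minimal _ isClosed_closure
    rintro _ ⟨v, rfl⟩
    exact preceq_shift v (hchain i).1
  have hmono : ∀ i j, i ≤ j → closure (orbit (c j)) ⊆ closure (orbit (c i)) := by
    intro i j hij
    induction j, hij using Nat.le_induction with
    | base => exact fun _ h => h
    | succ k hk ih => exact fun y hy => ih (hstep k hy)
  have hcomp : IsCompact (closure (orbit (c 0))) := isClosed_closure.isCompact
  obtain ⟨z, hz0, φ, hφ, hzt⟩ := hcomp.tendsto_subseq
    (x := c) (fun n => hmono 0 n (Nat.zero_le n) (preceq_refl (c n)))
  have hzO : ∀ j, Preceq z (c j) := by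
    intro j
    apply isClosed_closure.mem_of_tendsto hzt
    filter_upwards [eventually_ge_atTop j] with n hn
    exact hmono j (φ n) (le_trans hn hφ.le_apply) (preceq_refl (c (φ n)))
  have hzX : z ∈ X := hOX 0 hz0
  by_cases hL : Level0 X z
  swap
  · exact ⟨z, hzX, hzO, hL⟩
  -- z is minimal: its orbit closure is finite, so z is periodic
  have hMX : closure (orbit z) ⊆ X := closure_orbit_subset hX hzX
  have hMfin : (closure (orbit z)).Finite := by
    apply finite_of_minimal _ isClosed_closure.isCompact (hcount.mono hMX)
      ⟨z, preceq_refl z⟩ (fun v y hy => preceq_shift v hy)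
    intro y hy w hw
    exact preceq_trans hw (hL.2 y (hMX hy) hy)
  obtain ⟨p, hp, hzp0⟩ := exists_period hMfin subset_closure ((1,0) : ℤ×ℤ)
  obtain ⟨q, hq, hzq0⟩ := exists_period hMfin subset_closure ((0,1) : ℤ×ℤ)
  have hzp : shift ((p,0) : ℤ×ℤ) z = z := by
    have : (p • ((1,0) : ℤ×ℤ)) = ((p, 0) : ℤ×ℤ) := by
      simp [Prod.smul_mk]
    rwa [this] at hzp0
  have hzq : shift ((0,q) : ℤ×ℤ) z = z := by
    have : (q • ((0,1) : ℤ×ℤ)) = ((0, q) : ℤ×ℤ) := by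
      simp [Prod.smul_mk]
    rwa [this] at hzq0
  set s : ℤ := max p q with hs
  have hs0 : 0 < s := lt_of_lt_of_le hp (le_max_left p q)
  have hnp : nrm ((p,0) : ℤ×ℤ) ≤ s := by
    apply nrm_le
    · show |p| ≤ s
      rw [abs_of_pos hp]; exact le_max_left p q
    · show |(0:ℤ)| ≤ s
      simpa using hs0.le
  have hnq : nrm ((0,q) : ℤ×ℤ) ≤ s := by
    apply nrm_le
    · show |(0:ℤ)| ≤ s
      simpa using hs0.le
    · show |q| ≤ s
      rw [abs_of_pos hq]; exact le_max_right p q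
  -- choose configurations far along the chain agreeing with z on large boxes
  have hag : ∀ n : ℕ, ∃ m : ℕ, n ≤ m ∧
      ∀ u : ℤ×ℤ, nrm u ≤ (n:ℤ) + s → c (φ m) u = z u := by
    intro n
    have h1 := eventually_agree hzt ((finite_nrm_le ((n:ℤ)+s)).toFinset)
    obtain ⟨m, hm1, hm2⟩ := (h1.and (eventually_ge_atTop n)).exists
    exact ⟨m, hm2, fun u hu => hm1 u ((finite_nrm_le _).mem_toFinset.mpr hu)⟩
  choose m hm1 hm2 using hag
  -- each such configuration has a "break" of the periodicity of z
  have hbrk : ∀ n : ℕ, ∃ u, Brk ((p,0):ℤ×ℤ) ((0,q):ℤ×ℤ) (c (φ (m n))) u := by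
    intro n
    by_contra hno
    push_neg at hno
    have hper1 : shift ((p,0):ℤ×ℤ) (c (φ (m n))) = c (φ (m n)) := by
      funext u; exact (not_not.mp (hno u)).1
    have hper2 : shift ((0,q):ℤ×ℤ) (c (φ (m n))) = c (φ (m n)) := by
      funext u; exact (not_not.mp (hno u)).2
    have heqz : c (φ (m n)) = z := by
      apply eq_of_periodic_agree hp hq hper1 hper2 hzp hzq
      intro u hu
      apply hm2 n u
      have := Nat.cast_nonneg (α := ℤ) n
      omega
    have : Preceq (c (φ (m n))) (c (φ (m n) + 1)) := by
      rw [heqz]; exact hzO _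
    exact (hchain (φ (m n))).2 this
  choose ub hub1 hub2 using fun n => exists_min_brk (hbrk n)
  -- breaks are far away
  have hubn : ∀ n : ℕ, (n:ℤ) < nrm (ub n) := by
    intro n
    by_contra hle
    push_neg at hle
    apply hub1 n
    have hb0 : nrm (ub n) ≤ (n:ℤ) + s := by omega
    have hb1 : nrm (ub n + ((p,0):ℤ×ℤ)) ≤ (n:ℤ) + s :=
      le_trans (nrm_add_le _ _) (by omega)
    have hb2 : nrm (ub n + ((0,q):ℤ×ℤ)) ≤ (n:ℤ) + s :=
      le_trans (nrm_add_le _ _) (by omega)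
    constructor
    · calc c (φ (m n)) (ub n + (p,0)) = z (ub n + (p,0)) := hm2 n _ hb1
        _ = z (ub n) := congrFun hzp (ub n)
        _ = c (φ (m n)) (ub n) := (hm2 n _ hb0).symm
    · calc c (φ (m n)) (ub n + (0,q)) = z (ub n + (0,q)) := hm2 n _ hb2
        _ = z (ub n) := congrFun hzq (ub n)
        _ = c (φ (m n)) (ub n) := (hm2 n _ hb0).symm
  -- the sequence of recentered configurations, and its limit d
  obtain ⟨d, hd0, θ, hθ, hdt⟩ := hcomp.tendsto_subseq
    (x := fun n => shift (ub n) (c (φ (m n))))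
    (fun n => hmono 0 (φ (m n)) (Nat.zero_le _) (subset_closure ⟨ub n, rfl⟩))
  have hdO : ∀ j, Preceq d (c j) := by
    intro j
    apply isClosed_closure.mem_of_tendsto hdt
    filter_upwards [eventually_ge_atTop j] with n hn
    have hj : j ≤ φ (m (θ n)) :=
      le_trans hn (le_trans hθ.le_apply (le_trans (hm1 (θ n)) hφ.le_apply))
    exact hmono j (φ (m (θ n))) hj (subset_closure ⟨ub (θ n), rfl⟩)
  -- d has a break at the origin
  have hdbrk : Brk ((p,0):ℤ×ℤ) ((0,q):ℤ×ℤ) d 0 := by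
    intro hcon
    obtain ⟨k, hk⟩ := (eventually_agree hdt
      ({((0,0):ℤ×ℤ), ((p,0):ℤ×ℤ), ((0,q):ℤ×ℤ)} : Finset (ℤ×ℤ))).exists
    have h0 := hk ((0,0):ℤ×ℤ) (by simp)
    have h1 := hk ((p,0):ℤ×ℤ) (by simp)
    have h2 := hk ((0,q):ℤ×ℤ) (by simp)
    apply hub1 (θ k)
    have e1 : ((p,0):ℤ×ℤ) + ub (θ k) = ub (θ k) + ((p,0):ℤ×ℤ) := add_comm _ _
    have e2 : ((0,q):ℤ×ℤ) + ub (θ k) = ub (θ k) + ((0,q):ℤ×ℤ) := add_comm _ _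
    have e0 : ((0,0):ℤ×ℤ) + ub (θ k) = ub (θ k) := zero_add _
    have hc1 : d (0 + ((p,0):ℤ×ℤ)) = d 0 := hcon.1
    have hc2 : d (0 + ((0,q):ℤ×ℤ)) = d 0 := hcon.2
    have hz00 : (0 : ℤ×ℤ) = ((0,0) : ℤ×ℤ) := rfl
    constructor
    · show c (φ (m (θ k))) (ub (θ k) + (p,0)) = c (φ (m (θ k))) (ub (θ k))
      have l1 : c (φ (m (θ k))) (((p,0):ℤ×ℤ) + ub (θ k)) = d ((p,0):ℤ×ℤ) := h1
      have l0 : c (φ (m (θ k))) (((0,0):ℤ×ℤ) + ub (θ k)) = d ((0,0):ℤ×ℤ) := h0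
      rw [e1] at l1
      rw [e0] at l0
      rw [l1, l0]
      rw [← hz00, ← hc1, zero_add]
    · show c (φ (m (θ k))) (ub (θ k) + (0,q)) = c (φ (m (θ k))) (ub (θ k))
      have l2 : c (φ (m (θ k))) (((0,q):ℤ×ℤ) + ub (θ k)) = d ((0,q):ℤ×ℤ) := h2
      have l0 : c (φ (m (θ k))) (((0,0):ℤ×ℤ) + ub (θ k)) = d ((0,0):ℤ×ℤ) := h0
      rw [e2] at l2
      rw [e0] at l0
      rw [l2, l0]
      rw [← hz00, ← hc2, zero_add]
  -- d has arbitrarily large break-free balls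
  have hBF : ∀ r : ℕ, ∃ t : ℤ×ℤ, ∀ u : ℤ×ℤ, nrm u ≤ (r:ℤ) →
      ¬ Brk ((p,0):ℤ×ℤ) ((0,q):ℤ×ℤ) d (u + t) := by
    intro r
    have hgc : ∀ n : ℕ, ∃ t : ℤ×ℤ, nrm t ≤ (r:ℤ) + 1 ∧ ∀ u : ℤ×ℤ, nrm u ≤ (r:ℤ) →
        ¬ Brk ((p,0):ℤ×ℤ) ((0,q):ℤ×ℤ) (c (φ (m (θ (n + r + 1)))))
          (u + t + ub (θ (n + r + 1))) := by
      intro n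
      apply good_center (hub2 (θ (n+r+1))) (r:ℤ) (Nat.cast_nonneg r)
      have h1 := hubn (θ (n+r+1))
      have h2 : (n + r + 1 : ℕ) ≤ θ (n+r+1) := hθ.le_apply
      have h3 : ((n + r + 1 : ℕ) : ℤ) ≤ (θ (n+r+1) : ℤ) := by exact_mod_cast h2
      push_cast at h3 ⊢
      omega
    choose T hT1 hT2 using hgc
    obtain ⟨t, ht⟩ := exists_infinite_fiber (f := T) (k := (r:ℤ)+1) hT1
    refine ⟨t, fun u hu hB => ?_⟩
    obtain ⟨N, hN⟩ := Filter.eventually_atTop.mp (eventually_agree hdt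
      ({u + t, u + t + ((p,0):ℤ×ℤ), u + t + ((0,q):ℤ×ℤ)} : Finset (ℤ×ℤ)))
    obtain ⟨n, hnS, hnN⟩ := ht.exists_gt N
    have hag3 := hN (n + r + 1) (by omega)
    have hTn : T n = t := hnS
    apply hT2 n u hu
    rw [hTn]
    intro hconj
    apply hB
    have a0 := hag3 (u + t) (by simp)
    have a1 := hag3 (u + t + ((p,0):ℤ×ℤ)) (by simp)
    have a2 := hag3 (u + t + ((0,q):ℤ×ℤ)) (by simp)
    -- unfold the sequence values
    have b0 : c (φ (m (θ (n+r+1)))) ((u + t) + ub (θ (n+r+1))) = d (u + t) := a0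
    have b1 : c (φ (m (θ (n+r+1)))) ((u + t + ((p,0):ℤ×ℤ)) + ub (θ (n+r+1))) =
        d (u + t + ((p,0):ℤ×ℤ)) := a1
    have b2 : c (φ (m (θ (n+r+1)))) ((u + t + ((0,q):ℤ×ℤ)) + ub (θ (n+r+1))) =
        d (u + t + ((0,q):ℤ×ℤ)) := a2
    rw [add_right_comm (u+t) ((p,0):ℤ×ℤ) (ub (θ (n+r+1)))] at b1
    rw [add_right_comm (u+t) ((0,q):ℤ×ℤ) (ub (θ (n+r+1)))] at b2
    exact ⟨by rw [← b1, ← b0, hconj.1], by rw [← b2, ← b0, hconj.2]⟩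
  choose t ht using hBF
  -- limit of recentered copies of d: a fully periodic configuration g
  obtain ⟨g, hg0, ρ, hρ, hgt⟩ := hcomp.tendsto_subseq (x := fun r => shift (t r) d)
    (fun r => preceq_shift _ (hdO 0))
  have hgper : ∀ u : ℤ×ℤ, g (u + ((p,0):ℤ×ℤ)) = g u ∧ g (u + ((0,q):ℤ×ℤ)) = g u := by
    intro u
    obtain ⟨k, hk1, hk2⟩ := ((eventually_agree hgt
      ({u, u + ((p,0):ℤ×ℤ), u + ((0,q):ℤ×ℤ)} : Finset (ℤ×ℤ))).and
      (eventually_ge_atTop (nrm u).toNat)).exists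
    have hnu : nrm u ≤ ((ρ k : ℕ) : ℤ) := by
      have h1 : (nrm u).toNat ≤ ρ k := le_trans hk2 hρ.le_apply
      have h2 := nrm_nonneg u
      omega
    have hnb := not_not.mp (ht (ρ k) u hnu)
    have a0 := hk1 u (by simp)
    have a1 := hk1 (u + ((p,0):ℤ×ℤ)) (by simp)
    have a2 := hk1 (u + ((0,q):ℤ×ℤ)) (by simp)
    have b0 : d (u + t (ρ k)) = g u := a0
    have b1 : d ((u + ((p,0):ℤ×ℤ)) + t (ρ k)) = g (u + ((p,0):ℤ×ℤ)) := a1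
    have b2 : d ((u + ((0,q):ℤ×ℤ)) + t (ρ k)) = g (u + ((0,q):ℤ×ℤ)) := a2
    rw [add_right_comm u ((p,0):ℤ×ℤ) (t (ρ k))] at b1
    rw [add_right_comm u ((0,q):ℤ×ℤ) (t (ρ k))] at b2
    constructor
    · rw [← b1, ← b0, hnb.1]
    · rw [← b2, ← b0, hnb.2]
  have hgper1 : shift ((p,0):ℤ×ℤ) g = g := funext fun u => (hgper u).1
  have hgper2 : shift ((0,q):ℤ×ℤ) g = g := funext fun u => (hgper u).2
  have hgd : Preceq g d :=
    mem_closure_of_tendsto hgt (Filter.Eventually.of_forall fun k => ⟨t (ρ k), rfl⟩)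
  have hnd : ¬ Preceq d g := by
    intro h
    have h1 := period_of_preceq hgper1 h
    have h2 := period_of_preceq hgper2 h
    exact hdbrk ⟨congrFun h1 0, congrFun h2 0⟩
  refine ⟨d, hOX 0 hd0, hdO, ?_⟩
  intro hLd
  exact hnd (hLd.2 g (hOX 0 hg0) hgd)


end CountableSubshift
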